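/- arXiv:1206.2430 — 2 statements merged into one kernel-verified Lean document; each statement's English description precedes it below -/
import Mathlib

section
/- Let a₀ : ℝ → ℝ be C¹, bounded, with a₀' bounded and exponentially decaying (|a₀'(x)| ≤ C e^{-γ|x|}), and a₀(x) → a_∞ as x → +∞. Fix ε > 0 small, λ > 0, p = 2. Then the ODE system c₀'(t) = -ε λ a₀'(ε ρ₀(t)) c₀(t)², ρ₀'(t) = c₀(t), with c₀(0) = 1 and ρ₀(0) = -ε^{-1-δ₀} (δ₀ > 0 fixed), has a unique global solution for t ≥ 0, and c₀ satisfies the exact formula c₀(t) = exp(-λ[a₀(ε ρ₀(t)) - a₀(-ε^{-δ₀})]). -/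
/-!
With `ψ(x) = -λ a₀(εx)` the system reads `c' = ψ'(ρ) c²`, `ρ' = c`, and `c · exp(-ψ(ρ))` is
conserved along solutions. Hence `c = exp(ψ(ρ) - ψ(ρ(0)))`, and `ρ` solves the autonomous equation
`ρ' = f(ρ)` with `f = exp(ψ - ψ(ρ(0)))` positive, continuous, and bounded because `a₀` is. The
time map `H(x) = ∫_{ρ(0)}^x 1/f` then has derivative at least `1 / sup f`, so it is an increasing
bijection of `ℝ`; its inverse is the global solution, and every solution satisfies `H(ρ(t)) = t`.
-/

open Real Filter

lemma eq_of_hasDerivAt_zero_of_nonneg {f : ℝ → ℝ} (hf : ∀ t ≥ (0:ℝ), HasDerivAt f 0 t)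
    {t : ℝ} (ht : 0 ≤ t) : f t = f 0 :=
  constant_of_has_deriv_right_zero (fun x hx => (hf x hx.1).continuousAt.continuousWithinAt)
    (fun x hx => (hf x hx.1).hasDerivWithinAt) t ⟨ht, le_rfl⟩

lemma surjective_of_hasDerivAt_ge {H H' : ℝ → ℝ} {m : ℝ} (hm : 0 < m)
    (hH : ∀ x, HasDerivAt H (H' x) x) (hge : ∀ x, m ≤ H' x) : Function.Surjective H := by
  have hmono : Monotone fun x => H x - m * x :=
    monotone_of_hasDerivAt_nonneg (fun x => (hH x).sub ((hasDerivAt_id x).const_mul m))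
      (fun x => by simpa using hge x)
  have hcont : Continuous H := continuous_iff_continuousAt.mpr fun x => (hH x).continuousAt
  refine hcont.surjective ?_ ?_
  · refine tendsto_atTop_mono' _ ?_ (tendsto_atTop_add_const_left _ (H 0)
      (tendsto_id.const_mul_atTop hm))
    filter_upwards [eventually_ge_atTop 0] with x hx
    have := hmono hx
    simp only [id, mul_zero, sub_zero] at this ⊢
    linarith
  · refine tendsto_atBot_mono' _ ?_ (tendsto_atBot_add_const_left _ (H 0)
      (tendsto_id.const_mul_atBot hm))
    filter_upwards [eventually_le_atBot 0] with x hx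
    have := hmono hx
    simp only [id, mul_zero, sub_zero] at this ⊢
    linarith

theorem autonomous_ode_exists_unique {f : ℝ → ℝ} {M : ℝ} (hf : Continuous f)
    (hpos : ∀ x, 0 < f x) (hle : ∀ x, f x ≤ M) (x₀ : ℝ) :
    ∃ ρ : ℝ → ℝ, (∀ t, HasDerivAt ρ (f (ρ t)) t) ∧ ρ 0 = x₀ ∧
      ∀ ρ₁ : ℝ → ℝ, (∀ t ≥ (0:ℝ), HasDerivAt ρ₁ (f (ρ₁ t)) t) → ρ₁ 0 = x₀ →
        ∀ t ≥ (0:ℝ), ρ₁ t = ρ t := by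
  set H : ℝ → ℝ := fun x => ∫ s in x₀..x, (f s)⁻¹
  have hH : ∀ x, HasDerivAt H (f x)⁻¹ x := fun x =>
    ((hf.inv₀ fun y => (hpos y).ne').integral_hasStrictDerivAt x₀ x).hasDerivAt
  have hM : 0 < M := (hpos 0).trans_le (hle 0)
  have hsurj := surjective_of_hasDerivAt_ge (inv_pos.mpr hM) hH
    fun x => inv_anti₀ (hpos x) (hle x)
  let e : ℝ ≃o ℝ := StrictMono.orderIsoOfSurjective H
    (strictMono_of_hasDerivAt_pos hH fun x => inv_pos.mpr (hpos x)) hsurj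
  have hH₀ : H x₀ = 0 := intervalIntegral.integral_same
  refine ⟨e.symm, fun t => ?_, e.symm_apply_eq.mpr hH₀.symm, ?_⟩
  · simpa using HasDerivAt.of_local_left_inverse e.symm.continuous.continuousAt
      (hH (e.symm t)) (inv_ne_zero (hpos _).ne') (Eventually.of_forall e.apply_symm_apply)
  · intro ρ₁ hρ₁ hρ₁0 t ht
    have hconst : ∀ s ≥ (0:ℝ), HasDerivAt (fun y => H (ρ₁ y) - y) 0 s := fun s hs =>
      (((hH (ρ₁ s)).comp s (hρ₁ s hs)).sub (hasDerivAt_id' s)).congr_deriv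
        (by rw [inv_mul_cancel₀ (hpos (ρ₁ s)).ne', sub_self])
    have htime := eq_of_hasDerivAt_zero_of_nonneg hconst ht
    simp only [hρ₁0, hH₀, sub_zero] at htime
    exact e.eq_symm_apply.mpr (sub_eq_zero.mp htime)

def SolvesParameterSystem (ψ' : ℝ → ℝ) (s : Set ℝ) (c ρ : ℝ → ℝ) : Prop :=
  ∀ t ∈ s, HasDerivAt c (ψ' (ρ t) * c t ^ 2) t ∧ HasDerivAt ρ (c t) t

namespace SolvesParameterSystem

variable {ψ ψ' c ρ : ℝ → ℝ}

theorem eq_mul_exp (hψ : ∀ x, HasDerivAt ψ (ψ' x) x)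
    (h : SolvesParameterSystem ψ' (Set.Ici 0) c ρ) {t : ℝ} (ht : 0 ≤ t) :
    c t = c 0 * exp (ψ (ρ t) - ψ (ρ 0)) := by
  have hconserved : ∀ s ≥ (0:ℝ), HasDerivAt (fun y => c y * exp (-ψ (ρ y))) 0 s := fun s hs =>
    ((h s hs).1.mul ((hψ (ρ s)).comp s (h s hs).2).neg.exp).congr_deriv (by ring)
  have hconst := eq_of_hasDerivAt_zero_of_nonneg hconserved ht
  rw [sub_eq_add_neg, exp_add, mul_comm (exp _), ← mul_assoc, ← hconst, mul_assoc, ← exp_add,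
    neg_add_cancel, exp_zero, mul_one]

theorem exists_unique {M : ℝ} (hψ : ∀ x, HasDerivAt ψ (ψ' x) x) (hbdd : ∀ x, |ψ x| ≤ M)
    (x₀ : ℝ) :
    ∃ c ρ : ℝ → ℝ, SolvesParameterSystem ψ' Set.univ c ρ ∧ c 0 = 1 ∧ ρ 0 = x₀ ∧
      (∀ t, c t = exp (ψ (ρ t) - ψ x₀)) ∧
      ∀ c₁ ρ₁ : ℝ → ℝ, SolvesParameterSystem ψ' (Set.Ici 0) c₁ ρ₁ → c₁ 0 = 1 → ρ₁ 0 = x₀ →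
        ∀ t ≥ (0:ℝ), c₁ t = c t ∧ ρ₁ t = ρ t := by
  set f : ℝ → ℝ := fun x => exp (ψ x - ψ x₀)
  have hf : ∀ x, HasDerivAt f (ψ' x * f x) x := fun x =>
    ((hψ x).sub_const _).exp.congr_deriv (mul_comm _ _)
  have hle : ∀ x, f x ≤ exp (2 * M) := fun x => exp_le_exp.mpr <| by
    linarith [(abs_le.mp (hbdd x)).2, (abs_le.mp (hbdd x₀)).1]
  obtain ⟨ρ, hρ, hρ0, huniq⟩ := autonomous_ode_exists_unique
    (continuous_iff_continuousAt.mpr fun x => (hf x).continuousAt) (fun x => exp_pos _) hle x₀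
  have hc : ∀ t, HasDerivAt (f ∘ ρ) (ψ' (ρ t) * (f ∘ ρ) t ^ 2) t := fun t =>
    ((hf (ρ t)).comp t (hρ t)).congr_deriv (by simp only [Function.comp_apply]; ring)
  refine ⟨f ∘ ρ, ρ, fun t _ => ⟨hc t, hρ t⟩, by simp [f, hρ0], hρ0, fun _ => rfl, ?_⟩
  intro c₁ ρ₁ h hc₁0 hρ₁0
  have hc₁ : ∀ t ≥ (0:ℝ), c₁ t = f (ρ₁ t) := fun t ht => by
    rw [h.eq_mul_exp hψ ht, hc₁0, hρ₁0, one_mul]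
  have hρ₁ : ∀ t ≥ (0:ℝ), ρ₁ t = ρ t :=
    huniq ρ₁ (fun t ht => hc₁ t ht ▸ (h t ht).2) hρ₁0
  exact fun t ht => ⟨by rw [hc₁ t ht, hρ₁ t ht]; rfl, hρ₁ t ht⟩

end SolvesParameterSystem

theorem parameter_ODE_global_existence_uniqueness_general
    (a₀ : ℝ → ℝ) (ε lam δ₀ : ℝ)
    (ha : ContDiff ℝ 1 a₀) (hbdd : ∃ M, ∀ x, |a₀ x| ≤ M)
    (hε : 0 < ε) :
    ∃ c₀ ρ₀ : ℝ → ℝ,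
      (∀ t ≥ (0:ℝ),
        HasDerivAt c₀ (-ε * lam * deriv a₀ (ε * ρ₀ t) * (c₀ t) ^ 2) t ∧
        HasDerivAt ρ₀ (c₀ t) t) ∧
      c₀ 0 = 1 ∧ ρ₀ 0 = -ε ^ (-(1 + δ₀)) ∧
      (∀ t ≥ (0:ℝ),
        c₀ t = Real.exp (-lam * (a₀ (ε * ρ₀ t) - a₀ (-ε ^ (-δ₀))))) ∧
      (∀ c₁ ρ₁ : ℝ → ℝ,
        (∀ t ≥ (0:ℝ),
          HasDerivAt c₁ (-ε * lam * deriv a₀ (ε * ρ₁ t) * (c₁ t) ^ 2) t ∧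
          HasDerivAt ρ₁ (c₁ t) t) →
        c₁ 0 = 1 → ρ₁ 0 = -ε ^ (-(1 + δ₀)) →
        ∀ t ≥ (0:ℝ), c₁ t = c₀ t ∧ ρ₁ t = ρ₀ t) := by
  obtain ⟨M, hM⟩ := hbdd
  have hψ : ∀ x, HasDerivAt (fun x => -lam * a₀ (ε * x)) (-ε * lam * deriv a₀ (ε * x)) x :=
    fun x => (((ha.differentiable one_ne_zero (ε * x)).hasDerivAt.comp x
      ((hasDerivAt_id' x).const_mul ε)).const_mul (-lam)).congr_deriv (by ring)
  have hψ_bdd : ∀ x, |-lam * a₀ (ε * x)| ≤ |lam| * M := fun x => by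
    rw [abs_mul, abs_neg]
    exact mul_le_mul_of_nonneg_left (hM _) (abs_nonneg lam)
  have hx₀ : ε * -ε ^ (-(1 + δ₀)) = -ε ^ (-δ₀) := by
    rw [mul_neg, mul_comm, ← rpow_add_one hε.ne']
    congr 2
    ring
  obtain ⟨c, ρ, hsol, hc0, hρ0, hc, huniq⟩ :=
    SolvesParameterSystem.exists_unique hψ hψ_bdd (-ε ^ (-(1 + δ₀)))
  refine ⟨c, ρ, fun t _ => hsol t trivial, hc0, hρ0, fun t _ => ?_, huniq⟩
  rw [hc, hx₀]
  congr 1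
  ring

theorem parameter_ODE_global_existence_uniqueness
    (a₀ : ℝ → ℝ) (aInf C γ ε lam δ₀ : ℝ)
    (ha : ContDiff ℝ 1 a₀) (hbdd : ∃ M, ∀ x, |a₀ x| ≤ M)
    (hC : 0 < C) (hγ : 0 < γ)
    (hbdd' : ∀ x, |deriv a₀ x| ≤ C * Real.exp (-γ * |x|))
    (hlim : Tendsto a₀ atTop (nhds aInf))
    (hε : 0 < ε) (hlam : 0 < lam) (hδ₀ : 0 < δ₀) :
    ∃ c₀ ρ₀ : ℝ → ℝ,
      (∀ t ≥ (0:ℝ),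
        HasDerivAt c₀ (-ε * lam * deriv a₀ (ε * ρ₀ t) * (c₀ t) ^ 2) t ∧
        HasDerivAt ρ₀ (c₀ t) t) ∧
      c₀ 0 = 1 ∧ ρ₀ 0 = -ε ^ (-(1 + δ₀)) ∧
      (∀ t ≥ (0:ℝ),
        c₀ t = Real.exp (-lam * (a₀ (ε * ρ₀ t) - a₀ (-ε ^ (-δ₀))))) ∧
      (∀ c₁ ρ₁ : ℝ → ℝ,
        (∀ t ≥ (0:ℝ),
          HasDerivAt c₁ (-ε * lam * deriv a₀ (ε * ρ₁ t) * (c₁ t) ^ 2) t ∧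
          HasDerivAt ρ₁ (c₁ t) t) →
        c₁ 0 = 1 → ρ₁ 0 = -ε ^ (-(1 + δ₀)) →
        ∀ t ≥ (0:ℝ), c₁ t = c₀ t ∧ ρ₁ t = ρ₀ t) :=
  parameter_ODE_global_existence_uniqueness_general a₀ ε lam δ₀ ha hbdd hε
end

section
/- Let F, ζ : [0,T] → [0,∞) be continuous with ζ(t)² ≤ C₁(F(t) + a) and F(t) ≤ F(0) + b + C₂ ∫₀^t ε e^{-γε|ρ(s)|} ζ(s)² ds, where ρ' ≥ c₀ > 0 and a, b ≥ 0. Then ζ(t)² ≤ C (F(0) + a + b) for all t ∈ [0,T], with C depending only on C₁, C₂, γ, c₀ (not on T or ε). -/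
open Real

theorem gronwall_closing_argument
    (C₁ C₂ γ c₀ : ℝ) (hC₁ : 0 < C₁) (hC₂ : 0 < C₂) (hγ : 0 < γ) (hc₀ : 0 < c₀) :
    ∃ C : ℝ, 0 < C ∧
      ∀ (T ε a b : ℝ) (F ζ ρ ρ' : ℝ → ℝ),
        0 ≤ T → 0 < ε → 0 ≤ a → 0 ≤ b →
        ContinuousOn F (Set.Icc 0 T) → ContinuousOn ζ (Set.Icc 0 T) →
        (∀ t ∈ Set.Icc (0:ℝ) T, 0 ≤ F t) →
        (∀ t ∈ Set.Icc (0:ℝ) T, 0 ≤ ζ t) →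
        (∀ t ∈ Set.Icc (0:ℝ) T, HasDerivAt ρ (ρ' t) t) →
        (∀ t ∈ Set.Icc (0:ℝ) T, c₀ ≤ ρ' t) →
        (∀ t ∈ Set.Icc (0:ℝ) T, (ζ t) ^ 2 ≤ C₁ * (F t + a)) →
        (∀ t ∈ Set.Icc (0:ℝ) T,
          F t ≤ F 0 + b
            + C₂ * ∫ s in (0:ℝ)..t, ε * Real.exp (-γ * ε * |ρ s|) * (ζ s) ^ 2) →
        ∀ t ∈ Set.Icc (0:ℝ) T, (ζ t) ^ 2 ≤ C * (F 0 + a + b) := by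
  refine ⟨C₁ * Real.exp (C₁ * C₂ * (π / (γ * c₀))), by positivity, ?_⟩
  intro T ε a b F ζ ρ ρ' hT hε ha hb hFc hζc hFnn hζnn hρ hρ' hcoer hFb t ht
  have h0T : (0:ℝ) ∈ Set.Icc (0:ℝ) T := ⟨le_refl 0, hT⟩
  set K : ℝ := F 0 + a + b with hK
  have hKnn : 0 ≤ K := by
    have := hFnn 0 h0T; rw [hK]; linarith
  -- abbreviations
  set u : ℝ → ℝ := fun s => ε * Real.exp (-γ * ε * |ρ s|) with hu
  set w : ℝ → ℝ := fun s => ε * Real.exp (-γ * ε * |ρ s|) * (ζ s) ^ 2 with hw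
  set H : ℝ → ℝ := fun x => ∫ s in (0:ℝ)..x, ε * Real.exp (-γ * ε * |ρ s|) * (ζ s) ^ 2 with hHdef
  set φ : ℝ → ℝ := fun x => ∫ s in (0:ℝ)..x, ε * Real.exp (-γ * ε * |ρ s|) with hφdef
  have hFb' : ∀ s ∈ Set.Icc (0:ℝ) T, F s ≤ F 0 + b + C₂ * H s := fun s hs => hFb s hs
  -- basic continuity
  have hρca : ∀ s ∈ Set.Icc (0:ℝ) T, ContinuousAt ρ s := fun s hs => (hρ s hs).continuousAt
  have huca : ∀ s ∈ Set.Icc (0:ℝ) T, ContinuousAt u s := by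
    intro s hs
    have : ContinuousAt (fun x : ℝ => ε * Real.exp (-γ * ε * |x|)) (ρ s) := by fun_prop
    exact this.comp (hρca s hs)
  have hucOn : ContinuousOn u (Set.Icc 0 T) := fun s hs => (huca s hs).continuousWithinAt
  have hwcOn : ContinuousOn w (Set.Icc 0 T) := hucOn.mul (hζc.pow 2)
  have hwca : ∀ s ∈ Set.Ioo (0:ℝ) T, ContinuousAt w s := by
    intro s hs
    have hζa : ContinuousAt ζ s :=
      (hζc s (Set.Ioo_subset_Icc_self hs)).continuousAt (Icc_mem_nhds hs.1 hs.2)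
    exact (huca s (Set.Ioo_subset_Icc_self hs)).mul (hζa.pow 2)
  -- integrability
  have huint : ∀ x ∈ Set.Icc (0:ℝ) T, IntervalIntegrable u MeasureTheory.volume 0 x := by
    intro x hx
    exact (hucOn.mono (Set.Icc_subset_Icc le_rfl hx.2)).intervalIntegrable_of_Icc hx.1
  have hwint : ∀ x ∈ Set.Icc (0:ℝ) T, IntervalIntegrable w MeasureTheory.volume 0 x := by
    intro x hx
    exact (hwcOn.mono (Set.Icc_subset_Icc le_rfl hx.2)).intervalIntegrable_of_Icc hx.1
  -- derivatives of primitives at interior points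
  have humeas : ∀ s ∈ Set.Ioo (0:ℝ) T, StronglyMeasurableAtFilter u (nhds s) MeasureTheory.volume :=
    ContinuousAt.stronglyMeasurableAtFilter isOpen_Ioo
      (fun x hx => huca x (Set.Ioo_subset_Icc_self hx))
  have hwmeas : ∀ s ∈ Set.Ioo (0:ℝ) T, StronglyMeasurableAtFilter w (nhds s) MeasureTheory.volume :=
    ContinuousAt.stronglyMeasurableAtFilter isOpen_Ioo hwca
  have hφd : ∀ s ∈ Set.Ioo (0:ℝ) T, HasDerivAt φ (u s) s := by
    intro s hs
    exact intervalIntegral.integral_hasDerivAt_right (huint s (Set.Ioo_subset_Icc_self hs))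
      (humeas s hs) (huca s (Set.Ioo_subset_Icc_self hs))
  have hHd : ∀ s ∈ Set.Ioo (0:ℝ) T, HasDerivAt H (w s) s := by
    intro s hs
    exact intervalIntegral.integral_hasDerivAt_right (hwint s (Set.Ioo_subset_Icc_self hs))
      (hwmeas s hs) (hwca s hs)
  -- continuity of primitives
  have hφcOn : ContinuousOn φ (Set.Icc 0 T) := by
    have := intervalIntegral.continuousOn_primitive_interval'
      (μ := MeasureTheory.volume) (f := u) (b₁ := (0:ℝ)) (b₂ := T) (a := (0:ℝ))
      (huint T ⟨hT, le_rfl⟩) Set.left_mem_uIcc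
    rwa [Set.uIcc_of_le hT] at this
  have hHcOn : ContinuousOn H (Set.Icc 0 T) := by
    have := intervalIntegral.continuousOn_primitive_interval'
      (μ := MeasureTheory.volume) (f := w) (b₁ := (0:ℝ)) (b₂ := T) (a := (0:ℝ))
      (hwint T ⟨hT, le_rfl⟩) Set.left_mem_uIcc
    rwa [Set.uIcc_of_le hT] at this
  have hφ0 : φ 0 = 0 := intervalIntegral.integral_same
  have hH0 : H 0 = 0 := intervalIntegral.integral_same
  -- the comparison function g ∘ ρ
  have hgρd : ∀ s ∈ Set.Icc (0:ℝ) T,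
      HasDerivAt (fun x => (2 / γ) * Real.arctan (Real.exp (γ * ε * ρ x)))
        ((2 / γ) * (1 / (1 + Real.exp (γ * ε * ρ s) ^ 2) * (Real.exp (γ * ε * ρ s) * (γ * ε * ρ' s)))) s := by
    intro s hs
    have hin : HasDerivAt (fun x => γ * ε * ρ x) (γ * ε * ρ' s) s := (hρ s hs).const_mul (γ * ε)
    exact (hin.exp.arctan).const_mul (2 / γ)
  -- key pointwise inequality
  have key : ∀ s ∈ Set.Icc (0:ℝ) T,
      c₀ * u s ≤ (2 / γ) * (1 / (1 + Real.exp (γ * ε * ρ s) ^ 2) *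
        (Real.exp (γ * ε * ρ s) * (γ * ε * ρ' s))) := by
    intro s hs
    have hepos : (0:ℝ) < Real.exp (γ * ε * ρ s) := Real.exp_pos _
    have hden : (0:ℝ) < 1 + Real.exp (γ * ε * ρ s) ^ 2 := by positivity
    set y : ℝ := γ * ε * ρ s with hy
    have hyabs : -γ * ε * |ρ s| = -|y| := by
      rw [hy, abs_mul, abs_of_pos (mul_pos hγ hε)]; ring
    have habs : Real.exp (-|y|) * (1 + Real.exp y ^ 2) ≤ 2 * Real.exp y := by
      have e1 : Real.exp (-|y|) ≤ Real.exp y := Real.exp_le_exp.mpr (neg_abs_le y)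
      have e2 : Real.exp (-|y|) * Real.exp y ^ 2 ≤ Real.exp y := by
        have heq : Real.exp (-|y|) * Real.exp y ^ 2 = Real.exp (-|y| + (y + y)) := by
          rw [Real.exp_add, Real.exp_add, sq]
        rw [heq]
        exact Real.exp_le_exp.mpr (by have := le_abs_self y; linarith)
      nlinarith
    have hrhs : (2 / γ) * (1 / (1 + Real.exp y ^ 2) * (Real.exp y * (γ * ε * ρ' s)))
        = (2 * ε * ρ' s * Real.exp y) / (1 + Real.exp y ^ 2) := by
      field_simp
    simp only [hu]
    rw [hyabs, hrhs, le_div_iff₀ hden]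
    have h1 : c₀ * (ε * Real.exp (-|y|)) * (1 + Real.exp y ^ 2)
        ≤ c₀ * ε * (2 * Real.exp y) := by
      have := mul_le_mul_of_nonneg_left habs (by positivity : (0:ℝ) ≤ c₀ * ε)
      nlinarith
    have h2 : c₀ * ε * (2 * Real.exp y) ≤ ρ' s * ε * (2 * Real.exp y) :=
      mul_le_mul_of_nonneg_right (mul_le_mul_of_nonneg_right (hρ' s hs) hε.le) (by positivity)
    calc c₀ * (ε * Real.exp (-|y|)) * (1 + Real.exp y ^ 2)
        ≤ c₀ * ε * (2 * Real.exp y) := h1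
      _ ≤ ρ' s * ε * (2 * Real.exp y) := h2
      _ = 2 * ε * ρ' s * Real.exp y := by ring
  -- φ is bounded by π / (γ * c₀)
  have hφbound : φ t ≤ π / (γ * c₀) := by
    set θ : ℝ → ℝ := fun x => (2 / γ) * Real.arctan (Real.exp (γ * ε * ρ x)) - c₀ * φ x with hθ
    have hθd : ∀ s ∈ Set.Ioo (0:ℝ) T, HasDerivAt θ
        ((2 / γ) * (1 / (1 + Real.exp (γ * ε * ρ s) ^ 2) *
          (Real.exp (γ * ε * ρ s) * (γ * ε * ρ' s))) - c₀ * u s) s := by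
      intro s hs
      exact (hgρd s (Set.Ioo_subset_Icc_self hs)).sub ((hφd s hs).const_mul c₀)
    have hθmono : MonotoneOn θ (Set.Icc 0 T) := by
      apply monotoneOn_of_deriv_nonneg (convex_Icc 0 T)
      · refine ContinuousOn.sub ?_ (continuousOn_const.mul hφcOn)
        refine continuousOn_const.mul ?_
        refine Real.continuous_arctan.comp_continuousOn ?_
        refine Real.continuous_exp.comp_continuousOn ?_
        exact continuousOn_const.mul (fun s hs => (hρca s hs).continuousWithinAt)
      · rw [interior_Icc]
        exact fun s hs => ((hθd s hs).differentiableAt).differentiableWithinAt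
      · rw [interior_Icc]
        intro s hs
        rw [(hθd s hs).deriv]
        have := key s (Set.Ioo_subset_Icc_self hs)
        linarith
    have hmono := hθmono h0T ht ht.1
    have harcpos : (0:ℝ) < Real.arctan (Real.exp (γ * ε * ρ 0)) := by
      have := Real.arctan_strictMono (Real.exp_pos (γ * ε * ρ 0))
      rwa [Real.arctan_zero] at this
    have harclt : Real.arctan (Real.exp (γ * ε * ρ t)) < π / 2 :=
      Real.arctan_lt_pi_div_two _
    have h2γ : (0:ℝ) < 2 / γ := by positivity
    have hθ0 : θ 0 = (2 / γ) * Real.arctan (Real.exp (γ * ε * ρ 0)) := by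
      rw [hθ]; simp [hφ0]
    have hθt : θ t = (2 / γ) * Real.arctan (Real.exp (γ * ε * ρ t)) - c₀ * φ t := rfl
    rw [hθ0, hθt] at hmono
    have hub : (2 / γ) * Real.arctan (Real.exp (γ * ε * ρ t)) ≤ (2 / γ) * (π / 2) :=
      mul_le_mul_of_nonneg_left harclt.le h2γ.le
    have hlb : 0 ≤ (2 / γ) * Real.arctan (Real.exp (γ * ε * ρ 0)) := by positivity
    have hπγ : (2 / γ) * (π / 2) = π / γ := by field_simp
    rw [le_div_iff₀ (mul_pos hγ hc₀)]
    have : c₀ * φ t ≤ π / γ := by rw [← hπγ]; linarith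
    have hπγ' : π / γ * γ = π := by field_simp
    nlinarith
  -- the Gronwall function ψ
  set ψ : ℝ → ℝ := fun x => (K + C₂ * H x) * Real.exp (-(C₁ * C₂) * φ x) with hψ
  have hψd : ∀ s ∈ Set.Ioo (0:ℝ) T, HasDerivAt ψ
      ((0 + C₂ * w s) * Real.exp (-(C₁ * C₂) * φ s)
        + (K + C₂ * H s) * (Real.exp (-(C₁ * C₂) * φ s) * (-(C₁ * C₂) * u s))) s := by
    intro s hs
    exact ((hasDerivAt_const s K).add ((hHd s hs).const_mul C₂)).mul
      (((hφd s hs).const_mul (-(C₁ * C₂))).exp)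
  have hψanti : AntitoneOn ψ (Set.Icc 0 T) := by
    apply antitoneOn_of_deriv_nonpos (convex_Icc 0 T)
    · exact (continuousOn_const.add (continuousOn_const.mul hHcOn)).mul
        (Real.continuous_exp.comp_continuousOn (continuousOn_const.mul hφcOn))
    · rw [interior_Icc]
      exact fun s hs => ((hψd s hs).differentiableAt).differentiableWithinAt
    · rw [interior_Icc]
      intro s hs
      rw [(hψd s hs).deriv]
      have hs' := Set.Ioo_subset_Icc_self hs
      have hunn : 0 ≤ u s := by rw [hu]; positivity
      have hwus : w s = u s * ζ s ^ 2 := rfl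
      have hζ2 : ζ s ^ 2 ≤ C₁ * (F s + a) := hcoer s hs'
      have hFKH : F s + a ≤ K + C₂ * H s := by
        have := hFb' s hs'; rw [hK]; linarith
      have hFsa : 0 ≤ F s + a := add_nonneg (hFnn s hs') ha
      have hkey : C₂ * w s ≤ C₁ * C₂ * u s * (K + C₂ * H s) := by
        rw [hwus]
        calc C₂ * (u s * ζ s ^ 2) ≤ C₂ * (u s * (C₁ * (F s + a))) := by
              apply mul_le_mul_of_nonneg_left _ hC₂.le
              exact mul_le_mul_of_nonneg_left hζ2 hunn
          _ ≤ C₂ * (u s * (C₁ * (K + C₂ * H s))) := by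
              apply mul_le_mul_of_nonneg_left _ hC₂.le
              apply mul_le_mul_of_nonneg_left _ hunn
              exact mul_le_mul_of_nonneg_left hFKH hC₁.le
          _ = C₁ * C₂ * u s * (K + C₂ * H s) := by ring
      have hE : 0 < Real.exp (-(C₁ * C₂) * φ s) := Real.exp_pos _
      nlinarith [mul_le_mul_of_nonneg_right hkey hE.le]
  have hψle : ψ t ≤ ψ 0 := hψanti h0T ht ht.1
  have hψ0 : ψ 0 = K := by rw [hψ]; simp [hH0, hφ0]
  rw [hψ0] at hψle
  have hEE : Real.exp (-(C₁ * C₂) * φ t) * Real.exp ((C₁ * C₂) * φ t) = 1 := by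
    rw [← Real.exp_add]
    have : -(C₁ * C₂) * φ t + (C₁ * C₂) * φ t = 0 := by ring
    rw [this, Real.exp_zero]
  have h3 := mul_le_mul_of_nonneg_right hψle (Real.exp_pos ((C₁ * C₂) * φ t)).le
  have hψt : ψ t = (K + C₂ * H t) * Real.exp (-(C₁ * C₂) * φ t) := rfl
  rw [hψt, mul_assoc, hEE, mul_one] at h3
  -- h3 : K + C₂ * H t ≤ K * Real.exp ((C₁ * C₂) * φ t)
  have hexpb : Real.exp ((C₁ * C₂) * φ t) ≤ Real.exp (C₁ * C₂ * (π / (γ * c₀))) :=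
    Real.exp_le_exp.mpr (mul_le_mul_of_nonneg_left hφbound (by positivity))
  have h4 : K + C₂ * H t ≤ K * Real.exp (C₁ * C₂ * (π / (γ * c₀))) := by
    calc K + C₂ * H t ≤ K * Real.exp ((C₁ * C₂) * φ t) := h3
      _ ≤ K * Real.exp (C₁ * C₂ * (π / (γ * c₀))) :=
          mul_le_mul_of_nonneg_left hexpb hKnn
  have hζ2t : ζ t ^ 2 ≤ C₁ * (F t + a) := hcoer t ht
  have hFKHt : F t + a ≤ K + C₂ * H t := by
    have := hFb' t ht; rw [hK]; linarith
  calc ζ t ^ 2 ≤ C₁ * (F t + a) := hζ2t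
    _ ≤ C₁ * (K + C₂ * H t) := mul_le_mul_of_nonneg_left hFKHt hC₁.le
    _ ≤ C₁ * (K * Real.exp (C₁ * C₂ * (π / (γ * c₀)))) := mul_le_mul_of_nonneg_left h4 hC₁.le
    _ = C₁ * Real.exp (C₁ * C₂ * (π / (γ * c₀))) * (F 0 + a + b) := by rw [hK]; ring
end
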